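/- If 0 < t < 1 and x ∈ (0,1) satisfies t·artanh(x) = x, then x > √(1 − t). -/

import Mathlib

/-- The inverse hyperbolic tangent, artanh(x) = (1/2)·log((1+x)/(1−x)). -/
noncomputable def artanh (x : ℝ) : ℝ := (1 / 2) * Real.log ((1 + x) / (1 - x))

/-!
With `y = (1 + x) / (1 - x)` we have `sinh (log y) = (y - y⁻¹) / 2 = 2x / (1 - x²)`, so `u < sinh u`
for `u = log y > 0` gives `artanh x < x / (1 - x²)`. Hence `x = t · artanh x < t x / (1 - x²)`,
i.e. `1 - x² < t`.
-/

lemma log_lt_half_sub_inv {y : ℝ} (hy : 1 < y) : Real.log y < (y - y⁻¹) / 2 := by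
  rw [← Real.sinh_log (by linarith)]
  exact Real.self_lt_sinh_iff.2 (Real.log_pos hy)

lemma artanh_lt_div_one_sub_sq {x : ℝ} (hx0 : 0 < x) (hx1 : x < 1) :
    artanh x < x / (1 - x ^ 2) := by
  have hpos : 0 < 1 - x := by linarith
  have hy : 1 < (1 + x) / (1 - x) := by rw [one_lt_div hpos]; linarith
  have hsinh : ((1 + x) / (1 - x) - ((1 + x) / (1 - x))⁻¹) / 2 = 2 * (x / (1 - x ^ 2)) := by
    have : (1 + x) ≠ 0 := by linarith
    have : 1 - x ^ 2 ≠ 0 := by nlinarith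
    field_simp
    ring
  have := log_lt_half_sub_inv hy
  unfold artanh
  linarith

lemma one_sub_lt_sq_of_mul_artanh_eq {t x : ℝ} (ht : 0 < t) (hx0 : 0 < x) (hx1 : x < 1)
    (heq : t * artanh x = x) : 1 - t < x ^ 2 := by
  have hden : 0 < 1 - x ^ 2 := by nlinarith
  have h : x < t * x / (1 - x ^ 2) := by
    calc x = t * artanh x := heq.symm
      _ < t * (x / (1 - x ^ 2)) := mul_lt_mul_of_pos_left (artanh_lt_div_one_sub_sq hx0 hx1) ht
      _ = t * x / (1 - x ^ 2) := mul_div_assoc' ..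
  rw [lt_div_iff₀ hden] at h
  nlinarith

theorem solution_lower_bound_general (t x : ℝ) (ht : 0 < t)
    (hx : x ∈ Set.Ioo (0 : ℝ) 1) (heq : t * artanh x = x) :
    Real.sqrt (1 - t) < x := by
  obtain ⟨hx0, hx1⟩ := hx
  rw [Real.sqrt_lt' hx0]
  exact one_sub_lt_sq_of_mul_artanh_eq ht hx0 hx1 heq

theorem solution_lower_bound (t x : ℝ) (ht : 0 < t) (ht1 : t < 1)
    (hx : x ∈ Set.Ioo (0 : ℝ) 1) (heq : t * artanh x = x) :
    Real.sqrt (1 - t) < x :=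
  solution_lower_bound_general t x ht hx heq
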